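/- arXiv:1511.08903 — 2 statements merged into one kernel-verified Lean document; each statement's English description precedes it below -/
import Mathlib

section
/- Let φ : ℕ → (0,∞) be monotonically increasing with φ(n) → ∞ as n → ∞, and suppose limsup_{n→∞} n/φ(n) = +∞. Then the set E_max^φ = {x ∈ [0,1] : liminf_{n→∞} r_n(x)/φ(n) = 0 and limsup_{n→∞} r_n(x)/φ(n) = +∞} is residual in [0,1], i.e. its complement in [0,1] is of the first category (equivalently, E_max^φ is comeagre in [0,1]). -/
open Filter MeasureTheory Set

/-- The `k`-th binary digit (for `k ≥ 1`) of a real number `x`,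
namely `x_k = ⌊x * 2^k⌋ mod 2`, so that `x = Σ_{k ≥ 1} x_k / 2^k` for `x ∈ [0,1)`. -/
noncomputable def dyadicDigit (x : ℝ) (k : ℕ) : ℕ :=
  ⌊x * 2 ^ k⌋.toNat % 2

/-- The run-length function: `runLen x n` is the length of the longest run of `1`'s
among the first `n` dyadic digits `x_1, …, x_n` of `x`. -/
noncomputable def runLen (x : ℝ) (n : ℕ) : ℕ :=
  sSup {ℓ : ℕ | ∃ i, i + ℓ ≤ n ∧ ∀ j < ℓ, dyadicDigit x (i + j + 1) = 1}

/-- The exceptional set `E_max^φ` of points of `[0,1]` where `r_n(x)/φ(n)` has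
liminf `0` and limsup `+∞`. -/
noncomputable def Emax (φ : ℕ → ℝ) : Set ℝ :=
  {x ∈ Set.Icc (0 : ℝ) 1 |
    atTop.liminf (fun n => ((runLen x n / φ n : ℝ) : EReal)) = 0 ∧
    atTop.limsup (fun n => ((runLen x n / φ n : ℝ) : EReal)) = ⊤}


/-! Residual sets form a σ-filter, so it suffices to show that for each `M` the points with
`r_n(x)/φ(n) ≥ M` for infinitely many `n`, and those with `r_n(x)/φ(n) ≤ 1/(M+1)` for infinitely
many `n`, form residual sets. For every `N` each of them contains a dense open set: every dyadic
interval of rank `k` contains a dyadic interval of some rank `n ≥ N` on which the digits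
`k+1, …, n` are all `1` (so `r_n ≥ n - k ≥ M φ(n)` for suitable `n`, since `limsup n/φ(n) = ∞`),
and one on which they are all `0` (so `r_n ≤ k ≤ φ(n)/(M+1)` for large `n`, since `φ(n) → ∞`). -/

section Topology

variable {X : Type*} [TopologicalSpace X]

lemma eventually_residual_frequently_mem {s : ℕ → Set X}
    (hs : ∀ N, Dense (⋃ n ≥ N, interior (s n))) :
    ∀ᶠ x in residual X, ∃ᶠ n in atTop, x ∈ s n := by
  filter_upwards [eventually_countable_forall.2 fun N =>
    residual_of_dense_open (isOpen_biUnion fun n _ => isOpen_interior) (hs N)] with x hx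
  refine frequently_atTop.2 fun N => ?_
  obtain ⟨n, hn, hxn⟩ := mem_iUnion₂.1 (hx N)
  exact ⟨n, hn, interior_subset hxn⟩

end Topology

section ERealLimits

variable {ι : Type*} {l : Filter ι} {f : ι → ℝ}

lemma limsup_coe_eq_top_of_frequently_ge (h : ∀ M : ℕ, ∃ᶠ i in l, (M : ℝ) ≤ f i) :
    limsup (fun i => (f i : EReal)) l = ⊤ := by
  refine (EReal.eq_top_iff_forall_lt _).2 fun y => ?_
  obtain ⟨M, hM⟩ := exists_nat_gt y
  exact (EReal.coe_lt_coe_iff.2 hM).trans_le <|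
    le_limsup_of_frequently_le' <| (h M).mono fun i hi => EReal.coe_le_coe_iff.2 hi

lemma liminf_coe_eq_zero_of_frequently_le (h0 : ∀ i, 0 ≤ f i)
    (h : ∀ M : ℕ, ∃ᶠ i in l, f i ≤ 1 / (M + 1)) :
    liminf (fun i => (f i : EReal)) l = 0 := by
  refine le_antisymm ?_ <|
    le_liminf_of_le (by isBoundedDefault) <| .of_forall fun i => EReal.coe_nonneg.2 (h0 i)
  refine ge_of_tendsto' (EReal.tendsto_coe.2 tendsto_one_div_add_atTop_nhds_zero_nat) fun M => ?_
  exact liminf_le_of_frequently_le' <| (h M).mono fun i hi => EReal.coe_le_coe_iff.2 hi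

end ERealLimits

def dyadicInterval (n J : ℕ) : Set ℝ := Ioo (J / 2 ^ n) ((J + 1) / 2 ^ n)

lemma dyadicInterval_nonempty (n J : ℕ) : (dyadicInterval n J).Nonempty :=
  nonempty_Ioo.2 <| by gcongr; linarith

lemma floor_mul_two_pow_eq_of_mem_dyadicInterval {n J : ℕ} {x : ℝ}
    (hx : x ∈ dyadicInterval n J) : ⌊x * 2 ^ n⌋₊ = J := by
  obtain ⟨h₁, h₂⟩ := hx
  rw [div_lt_iff₀ (by positivity)] at h₁
  rw [lt_div_iff₀ (by positivity)] at h₂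
  exact (Nat.floor_eq_iff (by linarith [J.cast_nonneg (α := ℝ)])).2 ⟨h₁.le, h₂⟩

lemma dyadicInterval_subset {k m j r : ℕ} (hr : r < 2 ^ m) :
    dyadicInterval (k + m) (j * 2 ^ m + r) ⊆ dyadicInterval k j := by
  have hr' : (r : ℝ) + 1 ≤ 2 ^ m := by exact_mod_cast hr
  rintro x ⟨h₁, h₂⟩
  rw [pow_add] at h₁ h₂
  push_cast at h₁ h₂
  constructor
  · calc (j : ℝ) / 2 ^ k = j * 2 ^ m / (2 ^ k * 2 ^ m) := by field_simp
      _ ≤ (j * 2 ^ m + r) / (2 ^ k * 2 ^ m) := by gcongr; linarith [r.cast_nonneg (α := ℝ)]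
      _ < x := h₁
  · calc x < (j * 2 ^ m + r + 1) / (2 ^ k * 2 ^ m) := h₂
      _ ≤ (j + 1) * 2 ^ m / (2 ^ k * 2 ^ m) := by gcongr; linarith
      _ = (j + 1) / 2 ^ k := by field_simp

lemma dense_preimage_coe_Icc_of_inter_dyadicInterval_nonempty {S : Set ℝ}
    (hS : ∀ k j, (S ∩ dyadicInterval k j).Nonempty) :
    Dense (((↑) : Icc (0 : ℝ) 1 → ℝ) ⁻¹' S) := by
  rw [Subtype.dense_iff, Subtype.image_preimage_coe]
  refine (closure_Ico zero_ne_one).symm.subset.trans <|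
    closure_minimal (fun x hx => Metric.mem_closure_iff.2 fun ε hε => ?_) isClosed_closure
  obtain ⟨k, hk⟩ := exists_pow_lt_of_lt_one hε (by norm_num : (1 / 2 : ℝ) < 1)
  obtain ⟨y, hyS, hy₁, hy₂⟩ := hS k ⌊x * 2 ^ k⌋₊
  have hp : (0 : ℝ) < 2 ^ k := by positivity
  have hx₀ : 0 ≤ x * 2 ^ k := mul_nonneg hx.1 hp.le
  have hj₁ := Nat.floor_le hx₀
  have hj₂ := Nat.lt_floor_add_one (x * 2 ^ k)
  have hjk : (⌊x * 2 ^ k⌋₊ : ℝ) + 1 ≤ 2 ^ k := by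
    have : ⌊x * 2 ^ k⌋₊ < 2 ^ k := (Nat.floor_lt hx₀).2 (by push_cast; nlinarith [hx.2])
    exact_mod_cast this
  rw [div_lt_iff₀ hp] at hy₁
  rw [lt_div_iff₀ hp] at hy₂
  rw [one_div_pow, div_lt_iff₀ hp] at hk
  refine ⟨y, ⟨⟨by nlinarith, by nlinarith⟩, hyS⟩, ?_⟩
  rw [Real.dist_eq, abs_sub_lt_iff]
  constructor <;> nlinarith

lemma dense_iUnion_interior_of_dyadicInterval_subset {A : ℕ → Set ℝ} {N : ℕ}
    (hA : ∀ k j, ∃ n ≥ N, ∃ J, dyadicInterval n J ⊆ A n ∩ dyadicInterval k j) :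
    Dense (⋃ n ≥ N, interior (((↑) : Icc (0 : ℝ) 1 → ℝ) ⁻¹' A n)) := by
  have hS : ∀ k j, ((⋃ n ≥ N, interior (A n)) ∩ dyadicInterval k j).Nonempty := fun k j => by
    obtain ⟨n, hn, J, hJ⟩ := hA k j
    obtain ⟨y, hy⟩ := dyadicInterval_nonempty n J
    exact ⟨y, mem_biUnion hn (interior_maximal (fun z hz => (hJ hz).1) isOpen_Ioo hy), (hJ hy).2⟩
  refine (dense_preimage_coe_Icc_of_inter_dyadicInterval_nonempty hS).mono ?_
  rw [preimage_iUnion₂]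
  exact iUnion₂_mono fun n _ => preimage_interior_subset_interior_preimage continuous_subtype_val

lemma runLen_bddAbove (x : ℝ) (n : ℕ) :
    BddAbove {ℓ : ℕ | ∃ i, i + ℓ ≤ n ∧ ∀ j < ℓ, dyadicDigit x (i + j + 1) = 1} :=
  ⟨n, fun _ ⟨_, hi, _⟩ => by omega⟩

lemma le_runLen {x : ℝ} {n ℓ : ℕ} (i : ℕ) (hi : i + ℓ ≤ n)
    (hd : ∀ j < ℓ, dyadicDigit x (i + j + 1) = 1) : ℓ ≤ runLen x n :=
  le_csSup (runLen_bddAbove x n) ⟨i, hi, hd⟩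

lemma runLen_le {x : ℝ} {n K : ℕ}
    (h : ∀ i ℓ, i + ℓ ≤ n → (∀ j < ℓ, dyadicDigit x (i + j + 1) = 1) → ℓ ≤ K) :
    runLen x n ≤ K :=
  csSup_le ⟨0, 0, by simp, by simp⟩ fun ℓ ⟨i, hi, hd⟩ => h i ℓ hi hd

lemma dyadicDigit_eq_one_iff {x : ℝ} {k n : ℕ} (hk : k ≤ n) :
    dyadicDigit x k = 1 ↔ (⌊x * 2 ^ n⌋₊).testBit (n - k) := by
  have hpow : (2 : ℝ) ^ n = 2 ^ k * 2 ^ (n - k) := by rw [← pow_add, Nat.add_sub_cancel' hk]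
  have hx : x * 2 ^ k = x * 2 ^ n / ((2 ^ (n - k) : ℕ) : ℝ) := by
    rw [hpow]; push_cast; field_simp
  rw [dyadicDigit, Int.floor_toNat, hx, Nat.floor_div_natCast, Nat.testBit_eq_decide_div_mod_eq,
    decide_eq_true_iff]

lemma le_runLen_of_floor_mod_eq {x : ℝ} {k m : ℕ}
    (h : ⌊x * 2 ^ (k + m)⌋₊ % 2 ^ m = 2 ^ m - 1) : m ≤ runLen x (k + m) := by
  refine le_runLen k le_rfl fun t ht => (dyadicDigit_eq_one_iff (n := k + m) (by omega)).2 ?_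
  have hbit := Nat.testBit_mod_two_pow ⌊x * 2 ^ (k + m)⌋₊ m (k + m - (k + t + 1))
  rw [h, Nat.testBit_two_pow_sub_one] at hbit
  simpa [show k + m - (k + t + 1) < m by omega] using hbit.symm

lemma runLen_le_of_floor_mod_eq_zero {x : ℝ} {k m : ℕ}
    (h : ⌊x * 2 ^ (k + m)⌋₊ % 2 ^ m = 0) : runLen x (k + m) ≤ k := by
  refine runLen_le fun i ℓ hiℓ hd => le_of_not_gt fun hℓ => ?_
  have hone := (dyadicDigit_eq_one_iff (n := k + m) (by omega)).1 (hd (ℓ - 1) (by omega))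
  have hbit := Nat.testBit_mod_two_pow ⌊x * 2 ^ (k + m)⌋₊ m (k + m - (i + (ℓ - 1) + 1))
  rw [h, Nat.zero_testBit] at hbit
  simp [show k + m - (i + (ℓ - 1) + 1) < m by omega, hone] at hbit

section Growth

variable {φ : ℕ → ℝ}

lemma frequently_mul_add_le_of_limsup_eq_top (hpos : ∀ n, 0 < φ n) (hmono : Monotone φ)
    (hlimsup : atTop.limsup (fun n : ℕ => (((n : ℝ) / φ n : ℝ) : EReal)) = ⊤) (C : ℝ) (k : ℕ) :
    ∃ᶠ n : ℕ in atTop, C * φ n + k ≤ n := by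
  have hfreq : ∃ᶠ n : ℕ in atTop, ((C + k / φ 0 : ℝ) : EReal) < ((n / φ n : ℝ) : EReal) :=
    frequently_lt_of_lt_limsup (by isBoundedDefault) (hlimsup ▸ EReal.coe_lt_top _)
  refine hfreq.mono fun n hn => ?_
  rw [EReal.coe_lt_coe_iff, lt_div_iff₀ (hpos n)] at hn
  have hk : (k : ℝ) ≤ k / φ 0 * φ n := by
    rw [div_mul_eq_mul_div, le_div_iff₀ (hpos 0)]
    exact mul_le_mul_of_nonneg_left (hmono n.zero_le) k.cast_nonneg
  linarith

lemma exists_dyadicInterval_subset_runLen_ge (hpos : ∀ n, 0 < φ n) (hmono : Monotone φ)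
    (hlimsup : atTop.limsup (fun n : ℕ => (((n : ℝ) / φ n : ℝ) : EReal)) = ⊤) (M N k j : ℕ) :
    ∃ n ≥ N, ∃ J,
      dyadicInterval n J ⊆ {x | (M : ℝ) ≤ runLen x n / φ n} ∩ dyadicInterval k j := by
  obtain ⟨n, hn, hMn⟩ :=
    frequently_atTop.1 (frequently_mul_add_le_of_limsup_eq_top hpos hmono hlimsup M k) (max N k)
  obtain ⟨m, rfl⟩ := Nat.exists_eq_add_of_le (le_of_max_le_right hn)
  have hr : 2 ^ m - 1 < 2 ^ m := Nat.sub_lt (by positivity) one_pos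
  refine ⟨k + m, le_of_max_le_left hn, j * 2 ^ m + (2 ^ m - 1),
    fun x hx => ⟨?_, dyadicInterval_subset hr hx⟩⟩
  have hrun : m ≤ runLen x (k + m) := le_runLen_of_floor_mod_eq <| by
    rw [floor_mul_two_pow_eq_of_mem_dyadicInterval hx, Nat.mul_add_mod', Nat.mod_eq_of_lt hr]
  have hrun' : (m : ℝ) ≤ runLen x (k + m) := by exact_mod_cast hrun
  rw [mem_ofPred_eq, le_div_iff₀ (hpos _)]
  push_cast at hMn
  linarith

lemma exists_dyadicInterval_subset_runLen_le (hpos : ∀ n, 0 < φ n)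
    (htends : Tendsto φ atTop atTop) (M N k j : ℕ) :
    ∃ n ≥ N, ∃ J, dyadicInterval n J ⊆
      {x | (runLen x n / φ n : ℝ) ≤ 1 / (M + 1)} ∩ dyadicInterval k j := by
  obtain ⟨n, hφn, hn⟩ :=
    ((htends.eventually_ge_atTop ((M + 1) * k)).and (eventually_ge_atTop (max N k))).exists
  obtain ⟨m, rfl⟩ := Nat.exists_eq_add_of_le (le_of_max_le_right hn)
  refine ⟨k + m, le_of_max_le_left hn, j * 2 ^ m + 0,
    fun x hx => ⟨?_, dyadicInterval_subset (by positivity) hx⟩⟩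
  have hrun : runLen x (k + m) ≤ k := runLen_le_of_floor_mod_eq_zero <| by
    rw [floor_mul_two_pow_eq_of_mem_dyadicInterval hx, Nat.mul_add_mod', Nat.zero_mod]
  have hrun' : (runLen x (k + m) : ℝ) ≤ k := by exact_mod_cast hrun
  rw [mem_ofPred_eq, div_le_div_iff₀ (hpos _) (by positivity)]
  nlinarith

end Growth

theorem Emax_residual (φ : ℕ → ℝ) (hpos : ∀ n, 0 < φ n) (hmono : Monotone φ)
    (htends : Tendsto φ atTop atTop)
    (hlimsup : atTop.limsup (fun n : ℕ => (((n : ℝ) / φ n : ℝ) : EReal)) = ⊤) :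
    ((↑) : Set.Icc (0 : ℝ) 1 → ℝ) ⁻¹' Emax φ ∈ residual (Set.Icc (0 : ℝ) 1) := by
  have high (M : ℕ) : ∀ᶠ x : Icc (0 : ℝ) 1 in residual (Icc (0 : ℝ) 1),
      ∃ᶠ n in atTop, (x : ℝ) ∈ {y | (M : ℝ) ≤ runLen y n / φ n} :=
    eventually_residual_frequently_mem fun N => (dense_iUnion_interior_of_dyadicInterval_subset
      (exists_dyadicInterval_subset_runLen_ge hpos hmono hlimsup M N) :)
  have low (M : ℕ) : ∀ᶠ x : Icc (0 : ℝ) 1 in residual (Icc (0 : ℝ) 1),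
      ∃ᶠ n in atTop, (x : ℝ) ∈ {y | runLen y n / φ n ≤ 1 / (M + 1)} :=
    eventually_residual_frequently_mem fun N => (dense_iUnion_interior_of_dyadicInterval_subset
      (exists_dyadicInterval_subset_runLen_le hpos htends M N) :)
  filter_upwards [eventually_countable_forall.2 high, eventually_countable_forall.2 low]
    with x hhigh hlow
  exact ⟨x.2, liminf_coe_eq_zero_of_frequently_le
    (fun n => div_nonneg (Nat.cast_nonneg _) (hpos n).le) hlow,
    limsup_coe_eq_top_of_frequently_ge hhigh⟩
end

section
/- Equip Σ^∞ = {0,1}^ℕ with the metric d(x,y) = 2^{−min{k : x_{k+1} ≠ y_{k+1}}}. For ω ∈ Σ^∞ and n ≥ 1 let r_n(ω) denote the length of the longest run of 1's in (ω_1,…,ω_n). Let φ : ℕ → (0,∞) be monotonically increasing with φ(n) → ∞ and limsup_{n→∞} n/φ(n) = +∞. Then the set {ω ∈ Σ^∞ : liminf_{n→∞} r_n(ω)/φ(n) = 0 and limsup_{n→∞} r_n(ω)/φ(n) = +∞} contains a dense G_δ subset of Σ^∞ (in particular it is residual in Σ^∞). -/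
/-!
For each threshold, the sequences whose normalised run length `r_n(ω) / φ n` frequently exceeds
it, resp. frequently falls below it, form a residual set. Both properties only need to be reached
at some large `n`, and `r_n` depends on the first `n` terms only, so each stage is an open
condition; it is dense because any cylinder can be continued by a long block of `1`'s (making
`r_n ≥ n/2` at an `n` where `n / φ n` is huge) or by `0`'s only (keeping `r_n` bounded while
`φ n → ∞`). Countably many thresholds suffice, and in a Baire space a residual set contains a
dense `G_δ`.
-/

open Filter

/-- The run-length function on binary sequences: `seqRunLen ω n` is the length of the
longest run of `1`'s among the first `n` terms `ω_1, …, ω_n` (here `ω i` is the term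
`ω_{i+1}`, i.e. sequences are indexed from `0`). -/
noncomputable def seqRunLen (ω : ℕ → Fin 2) (n : ℕ) : ℕ :=
  sSup {ℓ : ℕ | ∃ i, i + ℓ ≤ n ∧ ∀ j < ℓ, ω (i + j) = 1}

namespace EReal

variable {ι : Type*} {f : Filter ι} {u : ι → ℝ}

theorem limsup_coe_eq_top_iff :
    limsup (fun i => (u i : EReal)) f = ⊤ ↔ ∀ K : ℝ, ∃ᶠ i in f, K < u i := by
  rw [← top_le_iff, le_limsup_iff]
  refine ⟨fun h K => (h K (coe_lt_top K)).mono fun _ => EReal.coe_lt_coe_iff.1, fun h y hy => ?_⟩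
  induction y using EReal.rec with
  | bot => exact (h 0).mono fun _ _ => bot_lt_coe _
  | coe y => exact (h y).mono fun _ => EReal.coe_lt_coe_iff.2
  | top => exact absurd hy (lt_irrefl _)

theorem liminf_coe_eq_zero (h0 : ∀ᶠ i in f, 0 ≤ u i) (hsmall : ∀ ε > 0, ∃ᶠ i in f, u i < ε) :
    liminf (fun i => (u i : EReal)) f = 0 := by
  refine le_antisymm ((liminf_le_iff).2 fun y hy => ?_)
    (le_liminf_of_le (by isBoundedDefault) (h0.mono fun _ => EReal.coe_nonneg.2))
  induction y using EReal.rec with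
  | bot => exact absurd hy (not_lt_of_ge bot_le)
  | coe y => exact (hsmall y (EReal.coe_pos.1 hy)).mono fun _ => EReal.coe_lt_coe_iff.2
  | top => exact (hsmall 1 one_pos).mono fun _ _ => coe_lt_top _

end EReal

theorem setOf_frequently_mem_residual {X : Type*} [TopologicalSpace X] {p : ℕ → X → Prop}
    (hopen : ∀ n, IsOpen {x | p n x}) (hdense : ∀ N, Dense {x | ∃ n ≥ N, p n x}) :
    {x | ∃ᶠ n in atTop, p n x} ∈ residual X := by
  have hsets : {x | ∃ᶠ n in atTop, p n x} = ⋂ N, ⋃ n ≥ N, {x | p n x} := by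
    ext x; simp [frequently_atTop]
  rw [hsets, countable_iInter_mem]
  refine fun N => residual_of_dense_open (isOpen_biUnion fun n _ => hopen n) ?_
  convert hdense N using 1
  ext x; simp

theorem dense_of_forall_exists_eq_of_lt {α : Type*} [TopologicalSpace α] {s : Set (ℕ → α)}
    (h : ∀ (x : ℕ → α) (M : ℕ), ∃ y ∈ s, ∀ i < M, y i = x i) : Dense s := by
  rw [dense_iff_inter_open]
  rintro U hU ⟨x, hx⟩
  obtain ⟨I, u, hIu, hsub⟩ := isOpen_pi_iff.1 hU x hx
  obtain ⟨y, hys, hy⟩ := h x (I.sup id + 1)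
  refine ⟨y, hsub fun i hi => ?_, hys⟩
  rw [hy i (Nat.lt_succ_of_le (Finset.le_sup (f := id) hi))]
  exact (hIu i hi).2

section seqRunLen

variable {ω ω' : ℕ → Fin 2} {M n : ℕ}

theorem seqRunLen_congr (h : ∀ i < n, ω i = ω' i) : seqRunLen ω n = seqRunLen ω' n := by
  unfold seqRunLen
  congr 1
  ext ℓ
  constructor <;> rintro ⟨i, hi, hall⟩ <;> refine ⟨i, hi, fun j hj => ?_⟩
  · rw [← h (i + j) (by omega)]; exact hall j hj
  · rw [h (i + j) (by omega)]; exact hall j hj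

theorem continuous_seqRunLen (n : ℕ) : Continuous fun ω => seqRunLen ω n := by
  have hfactor : (fun ω => seqRunLen ω n) =
      (fun v : Fin n → Fin 2 => seqRunLen (fun i => if h : i < n then v ⟨i, h⟩ else 0) n) ∘
        fun ω i => ω i :=
    funext fun ω => seqRunLen_congr fun i hi => (if_pos hi).symm
  rw [hfactor]
  exact continuous_of_discreteTopology.comp (continuous_pi fun i => continuous_apply _)

theorem sub_le_seqRunLen (h : ∀ i, M ≤ i → ω i = 1) : n - M ≤ seqRunLen ω n := by
  refine le_csSup ⟨n, ?_⟩ ⟨min M n, by omega, fun j hj => h _ (by omega)⟩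
  rintro ℓ ⟨i, hi, -⟩
  omega

theorem seqRunLen_le_of_eq_zero (h : ∀ i, M ≤ i → ω i = 0) : seqRunLen ω n ≤ M := by
  refine csSup_le ⟨0, 0, by omega, by omega⟩ ?_
  rintro ℓ ⟨i, hi, hall⟩
  by_contra! hlt
  have hone := hall (M - i) (by omega)
  rw [h _ (by omega)] at hone
  exact absurd hone (by decide)

end seqRunLen

section residual

variable {φ : ℕ → ℝ}

theorem setOf_frequently_lt_seqRunLen_div_mem_residual
    (hφ : ∀ K : ℝ, ∃ᶠ n in atTop, K < n / φ n) (K : ℝ) :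
    {ω | ∃ᶠ n in atTop, K < seqRunLen ω n / φ n} ∈ residual (ℕ → Fin 2) := by
  refine setOf_frequently_mem_residual
    (fun n => (isOpen_discrete {k : ℕ | K < k / φ n}).preimage (continuous_seqRunLen n))
    (fun N => dense_of_forall_exists_eq_of_lt fun x M => ?_)
  obtain ⟨n, hn, hlt⟩ := frequently_atTop.1 (hφ (2 * |K|)) (max N (2 * M))
  have hφn : 0 < φ n := by
    rcases div_pos_iff.1 ((by positivity : (0 : ℝ) ≤ 2 * |K|).trans_lt hlt) with h | h
    exacts [h.2, absurd h.1 (Nat.cast_nonneg _).not_gt]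
  refine ⟨fun i => if i < M then x i else 1, ⟨n, le_of_max_le_left hn, ?_⟩,
    fun i hi => if_pos hi⟩
  have hrun : n - M ≤ seqRunLen (fun i => if i < M then x i else 1) n :=
    sub_le_seqRunLen fun i hi => if_neg (Nat.not_lt.2 hi)
  -- a run of length `n - M ≥ n / 2` beats `K φ n` as soon as `n / φ n > 2 |K|`
  have hhalf : (n : ℝ) ≤ 2 * seqRunLen (fun i => if i < M then x i else 1) n := by
    exact_mod_cast (by omega : n ≤ 2 * seqRunLen (fun i => if i < M then x i else 1) n)
  rw [lt_div_iff₀ hφn] at hlt ⊢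
  linarith [mul_le_mul_of_nonneg_right (le_abs_self K) hφn.le]

theorem setOf_frequently_seqRunLen_div_lt_mem_residual (hφ : Tendsto φ atTop atTop) {ε : ℝ}
    (hε : 0 < ε) : {ω | ∃ᶠ n in atTop, seqRunLen ω n / φ n < ε} ∈ residual (ℕ → Fin 2) := by
  refine setOf_frequently_mem_residual
    (fun n => (isOpen_discrete {k : ℕ | k / φ n < ε}).preimage (continuous_seqRunLen n))
    (fun N => dense_of_forall_exists_eq_of_lt fun x M => ?_)
  obtain ⟨n, hMn, hn⟩ := ((hφ.eventually_gt_atTop (M / ε)).and (eventually_ge_atTop N)).exists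
  have hφn : 0 < φ n := (by positivity : (0 : ℝ) ≤ M / ε).trans_lt hMn
  refine ⟨fun i => if i < M then x i else 0, ⟨n, hn, ?_⟩, fun i hi => if_pos hi⟩
  have hrun : (seqRunLen (fun i => if i < M then x i else 0) n : ℝ) ≤ M := by
    exact_mod_cast seqRunLen_le_of_eq_zero fun i hi => if_neg (Nat.not_lt.2 hi)
  rw [div_lt_iff₀ hε] at hMn
  rw [div_lt_iff₀ hφn]
  linarith

end residual

theorem residual_seq_Emax_general (φ : ℕ → ℝ)
    (htends : Tendsto φ atTop atTop)
    (hlimsup : atTop.limsup (fun n : ℕ => (((n : ℝ) / φ n : ℝ) : EReal)) = ⊤) :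
    (∃ G : Set (ℕ → Fin 2), IsGδ G ∧ Dense G ∧
      G ⊆ {ω | atTop.liminf (fun n => ((seqRunLen ω n / φ n : ℝ) : EReal)) = 0 ∧
              atTop.limsup (fun n => ((seqRunLen ω n / φ n : ℝ) : EReal)) = ⊤}) ∧
    {ω : ℕ → Fin 2 | atTop.liminf (fun n => ((seqRunLen ω n / φ n : ℝ) : EReal)) = 0 ∧
        atTop.limsup (fun n => ((seqRunLen ω n / φ n : ℝ) : EReal)) = ⊤} ∈
      residual (ℕ → Fin 2) := by
  have hlarge := EReal.limsup_coe_eq_top_iff.1 hlimsup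
  have hres : {ω : ℕ → Fin 2 | atTop.liminf (fun n => ((seqRunLen ω n / φ n : ℝ) : EReal)) = 0 ∧
      atTop.limsup (fun n => ((seqRunLen ω n / φ n : ℝ) : EReal)) = ⊤} ∈ residual _ := by
    refine mem_of_superset (inter_mem
      (countable_iInter_mem.2 fun m : ℕ =>
        setOf_frequently_lt_seqRunLen_div_mem_residual hlarge m)
      (countable_iInter_mem.2 fun m : ℕ =>
        setOf_frequently_seqRunLen_div_lt_mem_residual htends (Nat.one_div_pos_of_nat (n := m))))
      ?_
    rintro ω ⟨hω_large, hω_small⟩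
    simp only [Set.mem_iInter, Set.mem_ofPred_eq] at hω_large hω_small
    refine ⟨EReal.liminf_coe_eq_zero ?_ fun ε hε => ?_, EReal.limsup_coe_eq_top_iff.2 fun K => ?_⟩
    · filter_upwards [htends.eventually_gt_atTop 0] with n hn
      exact div_nonneg (Nat.cast_nonneg _) hn.le
    · obtain ⟨m, hm⟩ := exists_nat_one_div_lt hε
      exact (hω_small m).mono fun n hn => hn.trans hm
    · obtain ⟨m, hm⟩ := exists_nat_ge K
      exact (hω_large m).mono fun n hn => hm.trans_lt hn
  obtain ⟨G, hGsub, hGδ, hGdense⟩ := mem_residual.1 hres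
  exact ⟨⟨G, hGδ, hGdense, hGsub⟩, hres⟩

theorem residual_seq_Emax (φ : ℕ → ℝ) (hpos : ∀ n, 0 < φ n) (hmono : Monotone φ)
    (htends : Tendsto φ atTop atTop)
    (hlimsup : atTop.limsup (fun n : ℕ => (((n : ℝ) / φ n : ℝ) : EReal)) = ⊤) :
    (∃ G : Set (ℕ → Fin 2), IsGδ G ∧ Dense G ∧
      G ⊆ {ω | atTop.liminf (fun n => ((seqRunLen ω n / φ n : ℝ) : EReal)) = 0 ∧
              atTop.limsup (fun n => ((seqRunLen ω n / φ n : ℝ) : EReal)) = ⊤}) ∧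
    {ω : ℕ → Fin 2 | atTop.liminf (fun n => ((seqRunLen ω n / φ n : ℝ) : EReal)) = 0 ∧
        atTop.limsup (fun n => ((seqRunLen ω n / φ n : ℝ) : EReal)) = ⊤} ∈
      residual (ℕ → Fin 2) :=
  residual_seq_Emax_general φ htends hlimsup
end
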